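/- Let G be a connected graph and T a subset of its vertices with |T| ≥ 2 such that for every x ∈ V(G) \ T, the graph G − x has at least two connected components containing vertices of T. Then the number of vertices of degree at least 3 in G is at most 3(|T| − 2) − |T₌₂|, where T₌₂ is the set of vertices of T that have degree exactly 2 in G. -/

import Mathlib

/-!
Induct on the vertex set. If every vertex is a terminal, each vertex is counted at most once,
and with only two terminals no vertex has degree `≥ 2`. Otherwise a non-terminal `x` separates two
terminals, so `G - x` splits as `C ⊔ D` with no edges between `C` and `D`. The pieces `G[C + x]`
and `G[D + x]`, with `x` added to the terminals of both, are again critically connected; together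
they have two more terminals than `G`, every vertex other than `x` keeps its degree, and
`deg x = d₁ + d₂`. Give a vertex weight `1` if its degree is `≥ 3` or it is a terminal of degree
`2`. Since `d₁ + d₂ ≥ 3` forces `d₁ ≥ 2` or `d₂ ≥ 2`, the weight of `x` does not drop, so the
invariant `∑ weight + 6 ≤ 3 |T|` passes from the pieces to `G`.
-/

open Finset

namespace Finset

variable {α : Type*} [DecidableEq α]

lemma two_le_card_insert {s : Finset α} {a x : α} (ha : a ∈ s) (hx : x ∉ s) :
    2 ≤ #(insert x s) := by
  rw [card_insert_of_notMem hx]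
  exact Nat.succ_le_succ (card_pos.mpr ⟨a, ha⟩)

lemma card_insert_lt_card {S C : Finset α} {x t : α} (hx : x ∈ S) (hCS : C ⊆ S.erase x)
    (ht : t ∈ S.erase x) (htC : t ∉ C) : #(insert x C) < #S := by
  refine card_lt_card ((ssubset_iff_of_subset (insert_subset hx (hCS.trans (erase_subset x S)))).mpr
    ⟨t, mem_of_mem_erase ht, ?_⟩)
  simp [htC, ne_of_mem_erase ht]

lemma card_insert_inter_add_card_insert_inter_sdiff {T s C : Finset α} {x : α} (hTs : T ⊆ s)
    (hx : x ∉ s) : #(insert x (T ∩ C)) + #(insert x (T ∩ (s \ C))) = #T + 2 := by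
  have hxT : ∀ {A}, x ∉ T ∩ A := fun h => hx (hTs (mem_inter.mp h).1)
  rw [card_insert_of_notMem hxT, card_insert_of_notMem hxT, ← inter_sdiff_assoc,
    inter_eq_left.mpr hTs, ← card_inter_add_card_sdiff T C]
  ring

end Finset

namespace SimpleGraph

variable {V : Type*} {G : SimpleGraph V}

lemma Walk.reachable_induce {s : Set V} {u v : V} (w : G.Walk u v) (hw : ∀ z ∈ w.support, z ∈ s) :
    (G.induce s).Reachable ⟨u, hw u w.start_mem_support⟩ ⟨v, hw v w.end_mem_support⟩ :=
  (w.connected_induce_support.preconnected ⟨u, w.start_mem_support⟩ ⟨v, w.end_mem_support⟩).map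
    (G.induceHomOfLE fun z hz => hw z hz).toHom

def ReachableIn (G : SimpleGraph V) (s : Finset V) (u v : V) : Prop :=
  ∃ w : G.Walk u v, ∀ z ∈ w.support, z ∈ s

namespace ReachableIn

variable {s t : Finset V} {u v w : V}

lemma refl (hu : u ∈ s) : G.ReachableIn s u u := ⟨.nil, by simpa⟩

lemma symm (h : G.ReachableIn s u v) : G.ReachableIn s v u :=
  let ⟨p, hp⟩ := h
  ⟨p.reverse, fun z hz => hp z (by simpa using hz)⟩

lemma trans (h₁ : G.ReachableIn s u v) (h₂ : G.ReachableIn s v w) : G.ReachableIn s u w :=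
  let ⟨p, hp⟩ := h₁
  let ⟨q, hq⟩ := h₂
  ⟨p.append q, fun z hz => (Walk.mem_support_append_iff _ _).mp hz |>.elim (hp z) (hq z)⟩

lemma mono (hst : s ⊆ t) (h : G.ReachableIn s u v) : G.ReachableIn t u v :=
  let ⟨p, hp⟩ := h
  ⟨p, fun z hz => hst (hp z hz)⟩

end ReachableIn

lemma Adj.reachableIn {s : Finset V} {u v : V} (h : G.Adj u v) (hu : u ∈ s) (hv : v ∈ s) :
    G.ReachableIn s u v :=
  ⟨h.toWalk, by simp [hu, hv]⟩

/-- `C` is a union of connected components of `G[s]`, provided `C ⊆ s`. -/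
def IsClosedIn (G : SimpleGraph V) (s C : Finset V) : Prop :=
  ∀ ⦃u v⦄, u ∈ C → v ∈ s → G.Adj u v → v ∈ C

lemma IsClosedIn.of_reachableIn (s : Finset V) (t : V) [DecidablePred (G.ReachableIn s t)] :
    G.IsClosedIn s (s.filter (G.ReachableIn s t)) := fun u v hu hv huv => by
  rw [mem_filter] at hu ⊢
  exact ⟨hv, hu.2.trans (huv.reachableIn hu.1 hv)⟩

lemma IsClosedIn.exists_separating {s : Finset V} {a b : V} (ha : a ∈ s)
    (hab : ¬ G.ReachableIn s a b) : ∃ C, G.IsClosedIn s C ∧ C ⊆ s ∧ a ∈ C ∧ b ∉ C := by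
  classical
  exact ⟨_, .of_reachableIn s a, filter_subset _ _, mem_filter.mpr ⟨ha, .refl ha⟩,
    fun hb => hab (mem_filter.mp hb).2⟩

section degIn

variable [DecidableRel G.Adj]

def degIn (G : SimpleGraph V) [DecidableRel G.Adj] (s : Finset V) (v : V) : ℕ :=
  #(s.filter (G.Adj v))

lemma degIn_lt_card {s : Finset V} {v : V} (hv : v ∈ s) : G.degIn s v < #s :=
  card_lt_card (filter_ssubset.mpr ⟨v, hv, G.irrefl⟩)

lemma degIn_univ [Fintype V] (v : V) : G.degIn univ v = G.degree v := by
  rw [degIn, ← card_neighborFinset_eq_degree]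
  congr 1
  ext w
  simp

end degIn

variable [DecidableEq V]

namespace IsClosedIn

variable {s S C : Finset V} {x u v : V}

lemma sdiff (hC : G.IsClosedIn s C) : G.IsClosedIn s (s \ C) := fun _ _ hu hv huv =>
  mem_sdiff.mpr ⟨hv, fun hvC => (mem_sdiff.mp hu).2 (hC hvC (mem_sdiff.mp hu).1 huv.symm)⟩

lemma mem_or_reachableIn_insert (hC : G.IsClosedIn (S.erase x) C) (hu : u ∈ C)
    (w : G.Walk u v) (hw : ∀ z ∈ w.support, z ∈ S) : v ∈ C ∨ G.ReachableIn (insert x C) u x := by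
  induction w with
  | nil => exact .inl hu
  | @cons _ a _ hua p ih =>
    have haS : a ∈ S := hw a (by simp)
    by_cases hax : a = x
    · subst hax
      exact .inr (hua.reachableIn (mem_insert_of_mem hu) (mem_insert_self _ _))
    have haC : a ∈ C := hC hu (mem_erase.mpr ⟨hax, haS⟩) hua
    refine (ih haC fun z hz => hw z (by simp [hz])).imp_right fun hax' => ?_
    exact (hua.reachableIn (mem_insert_of_mem hu) (mem_insert_of_mem haC)).trans hax'

lemma reachableIn_insert (hC : G.IsClosedIn (S.erase x) C) (hCS : C ⊆ S.erase x)
    (hS : ∀ u ∈ S, G.ReachableIn S u x) (hu : u ∈ insert x C) : G.ReachableIn (insert x C) u x := by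
  rcases mem_insert.mp hu with rfl | huC
  · exact .refl hu
  obtain ⟨w, hw⟩ := hS u (mem_of_mem_erase (hCS huC))
  exact (hC.mem_or_reachableIn_insert huC w hw).resolve_left fun h => (mem_erase.mp (hCS h)).1 rfl

end IsClosedIn

structure IsCriticallyConnected (G : SimpleGraph V) (S T : Finset V) : Prop where
  subset : T ⊆ S
  reachableIn : ∀ u ∈ S, ∀ v ∈ S, G.ReachableIn S u v
  separates : ∀ x ∈ S, x ∉ T → ∃ t₁ ∈ T, ∃ t₂ ∈ T, ¬ G.ReachableIn (S.erase x) t₁ t₂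

lemma IsCriticallyConnected.restrict {S T C : Finset V} {x : V} (h : G.IsCriticallyConnected S T)
    (hx : x ∈ S) (hxT : x ∉ T) (hC : G.IsClosedIn (S.erase x) C) (hCS : C ⊆ S.erase x) :
    G.IsCriticallyConnected (insert x C) (insert x (T ∩ C)) := by
  have hS : ∀ u ∈ S, G.ReachableIn S u x := fun u hu => h.reachableIn u hu x hx
  refine ⟨insert_subset_insert x inter_subset_right, fun u hu v hv =>
    (hC.reachableIn_insert hCS hS hu).trans (hC.reachableIn_insert hCS hS hv).symm, ?_⟩
  intro y hy hyT'
  have hyx : y ≠ x := fun e => hyT' (e ▸ mem_insert_self _ _)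
  have hyC : y ∈ C := (mem_insert.mp hy).resolve_left hyx
  have hyT : y ∉ T := fun hyT => hyT' (mem_insert_of_mem (mem_inter.mpr ⟨hyT, hyC⟩))
  -- a terminal on the far side of `x` is joined to `x` avoiding `C`, hence avoiding `y`
  have project : ∀ t ∈ T, ∃ t' ∈ insert x (T ∩ C), G.ReachableIn (S.erase y) t t' := by
    intro t ht
    by_cases htC : t ∈ C
    · exact ⟨t, mem_insert_of_mem (mem_inter.mpr ⟨ht, htC⟩),
        .refl (mem_erase.mpr ⟨fun e => hyT (e ▸ ht), h.subset ht⟩)⟩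
    have htD : t ∈ insert x (S.erase x \ C) := mem_insert_of_mem
      (mem_sdiff.mpr ⟨mem_erase.mpr ⟨fun e => hxT (e ▸ ht), h.subset ht⟩, htC⟩)
    refine ⟨x, mem_insert_self _ _, (hC.sdiff.reachableIn_insert sdiff_subset hS htD).mono ?_⟩
    refine insert_subset (mem_erase.mpr ⟨hyx.symm, hx⟩) fun z hz => ?_
    obtain ⟨hzS, hzC⟩ := mem_sdiff.mp hz
    exact mem_erase.mpr ⟨fun e => hzC (e ▸ hyC), mem_of_mem_erase hzS⟩
  obtain ⟨a, ha, b, hb, hab⟩ := h.separates y (mem_of_mem_erase (hCS hyC)) hyT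
  obtain ⟨a', ha', haa'⟩ := project a ha
  obtain ⟨b', hb', hbb'⟩ := project b hb
  refine ⟨a', ha', b', hb', fun ha'b' => hab ?_⟩
  have hsub : (insert x C).erase y ⊆ S.erase y :=
    erase_subset_erase y (insert_subset hx (hCS.trans (erase_subset x S)))
  exact (haa'.trans (ha'b'.mono hsub)).trans hbb'.symm

lemma isCriticallyConnected_univ [Fintype V] {T : Finset V} (hconn : G.Connected)
    (hcrit : ∀ x : V, x ∉ T → ∃ t₁ t₂ : ({v : V | v ≠ x} : Set V), (t₁ : V) ∈ T ∧ (t₂ : V) ∈ T ∧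
      ¬ (G.induce {v : V | v ≠ x}).Reachable t₁ t₂) :
    G.IsCriticallyConnected univ T where
  subset := subset_univ T
  reachableIn u _ v _ :=
    let ⟨w⟩ := hconn.preconnected u v
    ⟨w, fun z _ => mem_univ z⟩
  separates x _ hxT :=
    let ⟨t₁, t₂, ht₁, ht₂, hsep⟩ := hcrit x hxT
    ⟨t₁, ht₁, t₂, ht₂, fun ⟨w, hw⟩ =>
      hsep (w.reachable_induce fun z hz => (mem_erase.mp (hw z hz)).1)⟩

variable [DecidableRel G.Adj]

lemma degIn_union {s t : Finset V} (hst : Disjoint s t) (v : V) :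
    G.degIn (s ∪ t) v = G.degIn s v + G.degIn t v := by
  rw [degIn, filter_union, card_union_of_disjoint (disjoint_filter_filter hst)]
  rfl

lemma degIn_insert_self (s : Finset V) (v : V) : G.degIn (insert v s) v = G.degIn s v := by
  rw [degIn, filter_insert, if_neg (G.irrefl)]
  rfl

lemma IsClosedIn.degIn_insert {S C : Finset V} {x u : V} (hC : G.IsClosedIn (S.erase x) C)
    (hCS : C ⊆ S) (hx : x ∈ S) (hu : u ∈ C) : G.degIn (insert x C) u = G.degIn S u := by
  refine congrArg card (ext fun w => ?_)
  simp only [mem_filter, and_congr_left_iff]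
  refine fun huw => ⟨fun hw => insert_subset hx hCS hw, fun hw => ?_⟩
  by_cases hwx : w = x
  · exact hwx ▸ mem_insert_self x C
  · exact mem_insert_of_mem (hC hu (mem_erase.mpr ⟨hwx, hw⟩) huw)

def branchWeight (G : SimpleGraph V) [DecidableRel G.Adj] (S T : Finset V) (v : V) : ℕ :=
  (if 3 ≤ G.degIn S v then 1 else 0) + (if v ∈ T ∧ G.degIn S v = 2 then 1 else 0)

section branchWeight

variable {S T : Finset V} {v : V}

lemma branchWeight_le_one : G.branchWeight S T v ≤ 1 := by
  unfold branchWeight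
  split_ifs <;> omega

lemma branchWeight_eq_zero (h : G.degIn S v < 2) : G.branchWeight S T v = 0 := by
  unfold branchWeight
  split_ifs <;> omega

lemma sum_branchWeight_add_six_le_of_subset (hST : S ⊆ T) (hT : 2 ≤ #T) :
    ∑ v ∈ S, G.branchWeight S T v + 6 ≤ 3 * #T := by
  have hcard := card_le_card hST
  obtain hT | hT := (show 3 ≤ #T ∨ #T = 2 by omega)
  · have := sum_le_card_nsmul S (fun v => G.branchWeight S T v) 1 fun v _ => branchWeight_le_one
    simp only [smul_eq_mul, mul_one] at this
    omega
  · have : ∑ v ∈ S, G.branchWeight S T v = 0 :=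
      sum_eq_zero fun v hv => branchWeight_eq_zero (by have := degIn_lt_card (G := G) hv; omega)
    omega

lemma branchWeight_le_add_of_degIn_eq_add {S₁ S₂ T₁ T₂ : Finset V} (hvT : v ∉ T) (hv₁ : v ∈ T₁)
    (hv₂ : v ∈ T₂) (hdeg : G.degIn S v = G.degIn S₁ v + G.degIn S₂ v) :
    G.branchWeight S T v ≤ G.branchWeight S₁ T₁ v + G.branchWeight S₂ T₂ v := by
  simp only [branchWeight, hvT, hv₁, hv₂, false_and, true_and, if_false, hdeg]
  split_ifs <;> omega

lemma sum_branchWeight_univ [Fintype V] :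
    ∑ v, G.branchWeight univ T v = #{v | 3 ≤ G.degree v} + #{t ∈ T | G.degree t = 2} := by
  simp only [branchWeight, degIn_univ, sum_add_distrib, sum_boole, Nat.cast_id]
  congr 2
  ext v
  simp

namespace IsClosedIn

variable {C : Finset V} {x : V}

lemma branchWeight_insert (hC : G.IsClosedIn (S.erase x) C) (hCS : C ⊆ S.erase x) (hx : x ∈ S)
    (hv : v ∈ C) : G.branchWeight (insert x C) (insert x (T ∩ C)) v = G.branchWeight S T v := by
  have hvx : v ≠ x := (mem_erase.mp (hCS hv)).1
  simp only [branchWeight, hC.degIn_insert (hCS.trans (erase_subset x S)) hx hv, mem_insert,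
    mem_inter, hvx, hv, false_or, and_true]

lemma sum_branchWeight_insert (hC : G.IsClosedIn (S.erase x) C) (hCS : C ⊆ S.erase x)
    (hx : x ∈ S) :
    ∑ v ∈ insert x C, G.branchWeight (insert x C) (insert x (T ∩ C)) v =
      G.branchWeight (insert x C) (insert x (T ∩ C)) x + ∑ v ∈ C, G.branchWeight S T v := by
  rw [sum_insert fun h => (mem_erase.mp (hCS h)).1 rfl]
  exact congrArg _ (sum_congr rfl fun v hv => hC.branchWeight_insert hCS hx hv)

lemma sum_branchWeight_le (hC : G.IsClosedIn (S.erase x) C) (hCS : C ⊆ S.erase x) (hx : x ∈ S)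
    (hxT : x ∉ T) :
    ∑ v ∈ S, G.branchWeight S T v ≤
      ∑ v ∈ insert x C, G.branchWeight (insert x C) (insert x (T ∩ C)) v +
      ∑ v ∈ insert x (S.erase x \ C),
        G.branchWeight (insert x (S.erase x \ C)) (insert x (T ∩ (S.erase x \ C))) v := by
  have hdisj : Disjoint C (S.erase x \ C) := disjoint_sdiff
  have hsum : ∑ v ∈ S, G.branchWeight S T v = G.branchWeight S T x +
      (∑ v ∈ C, G.branchWeight S T v + ∑ v ∈ S.erase x \ C, G.branchWeight S T v) := by
    rw [← sum_union hdisj, union_sdiff_of_subset hCS, add_sum_erase S _ hx]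
  have hdeg : G.degIn S x = G.degIn (insert x C) x + G.degIn (insert x (S.erase x \ C)) x := by
    rw [degIn_insert_self, degIn_insert_self, ← degIn_union hdisj, union_sdiff_of_subset hCS,
      ← degIn_insert_self (S.erase x), insert_erase hx]
  have hx_le := branchWeight_le_add_of_degIn_eq_add hxT (mem_insert_self x (T ∩ C))
    (mem_insert_self x (T ∩ (S.erase x \ C))) hdeg
  rw [hsum, hC.sum_branchWeight_insert hCS hx, hC.sdiff.sum_branchWeight_insert sdiff_subset hx]
  omega

end IsClosedIn

end branchWeight

theorem IsCriticallyConnected.sum_branchWeight_add_six_le {S T : Finset V}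
    (h : G.IsCriticallyConnected S T) (hT : 2 ≤ #T) :
    ∑ v ∈ S, G.branchWeight S T v + 6 ≤ 3 * #T := by
  induction hn : #S using Nat.strong_induction_on generalizing S T with | _ n ih =>
  subst hn
  by_cases hST : S ⊆ T
  · exact sum_branchWeight_add_six_le_of_subset hST hT
  obtain ⟨x, hx, hxT⟩ := not_subset.mp hST
  obtain ⟨t₁, ht₁, t₂, ht₂, hsep⟩ := h.separates x hx hxT
  have hTS : T ⊆ S.erase x := fun t ht => mem_erase.mpr ⟨fun e => hxT (e ▸ ht), h.subset ht⟩
  obtain ⟨C, hC, hCS, ht₁C, ht₂C⟩ := IsClosedIn.exists_separating (hTS ht₁) hsep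
  have hxT' : ∀ {A}, x ∉ T ∩ A := fun h => hxT (mem_inter.mp h).1
  have IH₁ := ih _ (card_insert_lt_card hx hCS (hTS ht₂) ht₂C) (h.restrict hx hxT hC hCS)
    (two_le_card_insert (mem_inter.mpr ⟨ht₁, ht₁C⟩) hxT') rfl
  have IH₂ := ih _ (card_insert_lt_card hx sdiff_subset (hTS ht₁) fun h => (mem_sdiff.mp h).2 ht₁C)
    (h.restrict hx hxT hC.sdiff sdiff_subset)
    (two_le_card_insert (mem_inter.mpr ⟨ht₂, mem_sdiff.mpr ⟨hTS ht₂, ht₂C⟩⟩) hxT') rfl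
  have := card_insert_inter_add_card_insert_inter_sdiff (C := C) hTS (notMem_erase x S)
  have := hC.sum_branchWeight_le hCS hx hxT
  omega

end SimpleGraph

open Finset SimpleGraph in
/-- Under the same hypotheses as Statement 0, the number of vertices of degree
at least 3 is at most `3(|T| − 2) − |T₌₂|`, where `T₌₂` is the set of vertices of `T` of
degree exactly 2 in `G`. -/
theorem stmt1 {V : Type*} [Fintype V] [DecidableEq V]
    (G : SimpleGraph V) [DecidableRel G.Adj] (T : Finset V)
    (hconn : G.Connected) (hT : 2 ≤ T.card)
    (hcrit : ∀ x : V, x ∉ T →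
      ∃ t₁ t₂ : ({v : V | v ≠ x} : Set V), (t₁ : V) ∈ T ∧ (t₂ : V) ∈ T ∧
        ¬ (SimpleGraph.induce {v : V | v ≠ x} G).Reachable t₁ t₂) :
    (Finset.univ.filter fun v => 3 ≤ G.degree v).card ≤
      3 * (T.card - 2) - (T.filter fun t => G.degree t = 2).card := by
  have := (isCriticallyConnected_univ hconn hcrit).sum_branchWeight_add_six_le hT
  rw [sum_branchWeight_univ] at this
  omega
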